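/- First entrance time degree bound (abstract form): Let f be holomorphic with exactly b critical 'ends' (pairwise separated by puzzle pieces) and suppose δ bounds the local degree of f at each critical end. Let z have first entrance time r into a puzzle piece P_n (so f^i(z) ∉ P_n for 0 ≤ i < r and f^r(z) ∈ P_n). Then the sets f^i(P_{n+r}(z)), 0 ≤ i < r, each contain a given critical end at most once, and consequently deg(f^r : P_{n+r}(z) → P_n) ≤ δ^b. -/
import Mathlib


open Set Function

/-- First entrance time degree bound (abstract form). `Piece m x` denotes the puzzle piece
of depth `m` containing `x`; `Crit` is the set of critical ends, `b` their number, `δ` a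
bound on the local degree at each critical end, and `D m k x` the degree of
`f^k : Piece (m+k) x → Piece m (f^k x)`. If `r` is the first entrance time of `z` into the
piece `P_n = Piece n (f^r z)`, then each critical end lies in at most one of the pieces
`f^i(P_{n+r}(z)) = Piece (n + (r-i)) (f^i z)`, `0 ≤ i < r`, and consequently
`deg (f^r : P_{n+r}(z) → P_n) ≤ δ^b`. -/
theorem first_entrance_degree_bound
    {X : Type*} (f : X → X) (Piece : ℕ → X → Set X) (Crit : Finset X)
    (b δ n r : ℕ) (z : X) (D : ℕ → ℕ → X → ℕ)
    (h_mem : ∀ m x, x ∈ Piece m x)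
    (h_eq : ∀ m x y, y ∈ Piece m x → Piece m y = Piece m x)
    (h_nest : ∀ m x, Piece (m + 1) x ⊆ Piece m x)
    (h_map : ∀ m x, f '' Piece (m + 1) x ⊆ Piece m (f x))
    (hb : Crit.card = b) (hδ : 1 ≤ δ)
    (hD_zero : ∀ m x, D m 0 x = 1)
    (hD_crit : ∀ m x, (∃ c ∈ Crit, c ∈ Piece (m + 1) x) → D m 1 x ≤ δ)
    (hD_nocrit : ∀ m x, (∀ c ∈ Crit, c ∉ Piece (m + 1) x) → D m 1 x = 1)
    (hD_mul : ∀ m k x, D m (k + 1) x = D (m + k) 1 x * D m k (f x))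
    (h_min : ∀ i, i < r → f^[i] z ∉ Piece n (f^[r] z)) :
    (∀ c ∈ Crit, ∀ i j, i < j → j < r →
      c ∈ Piece (n + (r - i)) (f^[i] z) → c ∉ Piece (n + (r - j)) (f^[j] z)) ∧
    D n r z ≤ δ ^ b := by
  classical
  -- nesting for arbitrary depth differences
  have nest : ∀ m m' x, m ≤ m' → Piece m' x ⊆ Piece m x := by
    intro m m' x h
    induction h with
    | refl => exact subset_rfl
    | step h ih => exact (h_nest _ _).trans ih
  -- iterates map pieces into pieces
  have iter_map : ∀ k m (x x' : X), x' ∈ Piece (m + k) x → f^[k] x' ∈ Piece m (f^[k] x) := by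
    intro k
    induction k with
    | zero => intro m x x' h; simpa using h
    | succ k ih =>
      intro m x x' h
      have h1 : f x' ∈ Piece (m + k) (f x) :=
        h_map (m + k) x ⟨x', h, rfl⟩
      have := ih m (f x) (f x') h1
      simpa [Function.iterate_succ_apply] using this
  -- Part 1
  have claim : ∀ c ∈ Crit, ∀ i j, i < j → j < r →
      c ∈ Piece (n + (r - i)) (f^[i] z) → c ∉ Piece (n + (r - j)) (f^[j] z) := by
    intro c _hc i j hij hjr hci hcj
    have hjr' : j ≤ r := hjr.le
    -- f^[i] z ∈ Piece (n + (r - j)) (f^[j] z)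
    have h1 : f^[i] z ∈ Piece (n + (r - i)) c := by
      rw [h_eq _ _ _ hci]; exact h_mem _ _
    have h2 : f^[i] z ∈ Piece (n + (r - j)) c :=
      nest _ _ _ (by omega) h1
    have h3 : f^[i] z ∈ Piece (n + (r - j)) (f^[j] z) := by
      rwa [h_eq _ _ _ hcj] at h2
    have h4 : f^[r - j] (f^[i] z) ∈ Piece n (f^[r - j] (f^[j] z)) :=
      iter_map (r - j) n (f^[j] z) (f^[i] z) h3
    have e1 : f^[r - j] (f^[j] z) = f^[r] z := by
      rw [← Function.iterate_add_apply]
      congr 1; omega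
    have e2 : f^[r - j] (f^[i] z) = f^[(r - j) + i] z := by
      rw [← Function.iterate_add_apply]
    rw [e1, e2] at h4
    exact h_min ((r - j) + i) (by omega) h4
  refine ⟨claim, ?_⟩
  -- Part 2
  have key : ∀ k m (x : X), D m k x ≤
      ∏ i ∈ Finset.range k,
        (if ∃ c ∈ Crit, c ∈ Piece (m + (k - i)) (f^[i] x) then δ else 1) := by
    intro k
    induction k with
    | zero => intro m x; simp [hD_zero]
    | succ k ih =>
      intro m x
      rw [hD_mul, Finset.prod_range_succ']
      have hfirst : D (m + k) 1 x ≤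
          (if ∃ c ∈ Crit, c ∈ Piece (m + (k + 1 - 0)) (f^[0] x) then δ else 1) := by
        by_cases h : ∃ c ∈ Crit, c ∈ Piece (m + (k + 1 - 0)) (f^[0] x)
        · rw [if_pos h]
          apply hD_crit
          obtain ⟨c, hc, hcp⟩ := h
          exact ⟨c, hc, by simpa [Nat.add_assoc] using hcp⟩
        · rw [if_neg h]
          refine le_of_eq (hD_nocrit _ _ ?_)
          intro c hc hcp
          exact h ⟨c, hc, by simpa [Nat.add_assoc] using hcp⟩
      have hrest : D m k (f x) ≤
          ∏ i ∈ Finset.range k,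
            (if ∃ c ∈ Crit, c ∈ Piece (m + (k + 1 - (i + 1))) (f^[i + 1] x) then δ else 1) := by
        refine (ih m (f x)).trans (le_of_eq ?_)
        refine Finset.prod_congr rfl fun i _ => ?_
        congr 1
        simp only [Function.iterate_succ_apply, Nat.succ_sub_succ]
      calc D (m + k) 1 x * D m k (f x)
          ≤ (if ∃ c ∈ Crit, c ∈ Piece (m + (k + 1 - 0)) (f^[0] x) then δ else 1) *
            ∏ i ∈ Finset.range k,
              (if ∃ c ∈ Crit, c ∈ Piece (m + (k + 1 - (i + 1))) (f^[i + 1] x) then δ else 1) :=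
            Nat.mul_le_mul hfirst hrest
        _ = _ := mul_comm _ _
  have hkey := key r n z
  set p : ℕ → Prop := fun i => ∃ c ∈ Crit, c ∈ Piece (n + (r - i)) (f^[i] z) with hp
  have hprod : (∏ i ∈ Finset.range r, (if p i then δ else 1)) =
      δ ^ ((Finset.range r).filter p).card := by
    rw [Finset.prod_ite, Finset.prod_const, Finset.prod_const_one, mul_one]
  -- injective choice of critical point
  have hcard : ((Finset.range r).filter p).card ≤ b := by
    rw [← hb]
    have : ∀ i ∈ (Finset.range r).filter p, p i := by
      intro i hi; exact (Finset.mem_filter.mp hi).2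
    refine Finset.card_le_card_of_injOn
      (fun i => if h : p i then h.choose else z) ?_ ?_
    · intro i hi
      have hpi := (Finset.mem_filter.mp hi).2
      simp only [dif_pos hpi]
      exact hpi.choose_spec.1
    · intro i hi i' hi' heq
      by_contra hne
      have hpi := (Finset.mem_filter.mp hi).2
      have hpi' := (Finset.mem_filter.mp hi').2
      have hir : i < r := Finset.mem_range.mp (Finset.mem_filter.mp hi).1
      have hi'r : i' < r := Finset.mem_range.mp (Finset.mem_filter.mp hi').1
      simp only [dif_pos hpi, dif_pos hpi'] at heq
      have hc1 := hpi.choose_spec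
      have hc2 := hpi'.choose_spec
      rcases lt_or_gt_of_ne hne with hlt | hgt
      · exact claim _ hc1.1 i i' hlt hi'r hc1.2 (heq ▸ hc2.2)
      · exact claim _ hc2.1 i' i hgt hir hc2.2 (heq ▸ hc1.2)
  calc D n r z ≤ ∏ i ∈ Finset.range r, (if p i then δ else 1) := hkey
    _ = δ ^ ((Finset.range r).filter p).card := hprod
    _ ≤ δ ^ b := Nat.pow_le_pow_right hδ hcard
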